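/- Let Y be a metric space and Z a normed linear space. Given a function f : Y → Z and a sequence of continuous functions h_n : Y → Z, there exist bounded locally Lipschitz functions f_n : Y → Z such that: (a) f_n(y) → z whenever y ∈ Y, z ∈ Z and h_n(y) → z; (b) the pair ({f_n}, f) has UCPC if the pair ({h_n}, f) has UCPC; and (c) {f_n} is uniformly bounded on B_Y(a,r) whenever a ∈ Y, r ∈ (0,∞) ∪ {∞}, h_n → f pointwise on B_Y(a,2r) and f is bounded on B_Y(a,2r). -/

import Mathlib

/-!
Each `h n` is first replaced by a locally Lipschitz `G n` with `‖G n - h n‖ ≤ 1 / (n + 1)`, an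
average of values of `h n` against a locally Lipschitz partition of unity. Then `G n y` is
retracted radially onto the closed ball of radius
`Λ n y = 1 + sup_{y'} (min (liminf_k ‖h k y'‖) n - n² d(y, y'))`.
The level `Λ n` is `n²`-Lipschitz and at most `1 + n`, so the retracted functions are bounded and
locally Lipschitz. If `‖h k y - z‖ ≤ 1/4` for all large `k`, then `Λ n y ≥ ‖z‖ + 3/4 ≥ ‖G n y‖`
once `n ≥ ‖z‖`, so the retraction does nothing: this gives convergence and UCPC. For the bound on
`B(a, r)`: once `1/n < r`, points farther than `1/n` from `y ∈ B(a, r)` contribute at most `0` to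
the supremum, and the others lie in `B(a, 2r)`, where `liminf_k ‖h k‖ = ‖f‖ ≤ M`.
-/

open Filter Topology Metric ENNReal

/-- The pair `({h n}, f)` has the property of uniform convergence at points of
continuity (UCPC): for every point `y₀` where `f` is continuous and every
`ε > 0` there are `k₀ ∈ ℕ` and a neighborhood `U` of `y₀` such that
`‖h k y - f y₀‖ < ε` for every `k ≥ k₀` and `y ∈ U`. -/
def UCPC {Y Z : Type*} [TopologicalSpace Y] [NormedAddCommGroup Z]
    (h : ℕ → Y → Z) (f : Y → Z) : Prop :=
  ∀ y₀, ContinuousAt f y₀ → ∀ ε > (0 : ℝ), ∃ k₀ : ℕ, ∃ U ∈ nhds y₀,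
    ∀ k ≥ k₀, ∀ y ∈ U, ‖h k y - f y₀‖ < ε

open NNReal Function

section LocallyLipschitz

variable {X : Type*} [PseudoEMetricSpace X]

lemma LocallyLipschitz.of_forall_eventuallyEq {E : Type*} [PseudoEMetricSpace E] {f : X → E}
    (hf : ∀ x, ∃ g : X → E, LocallyLipschitz g ∧ f =ᶠ[𝓝 x] g) : LocallyLipschitz f := by
  intro x
  obtain ⟨g, hg, hfg⟩ := hf x
  obtain ⟨K, t, ht, hgt⟩ := hg x
  refine ⟨K, t ∩ {y | f y = g y}, inter_mem ht hfg, fun a ha b hb => ?_⟩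
  rw [ha.2, hb.2]
  exact hgt ha.1 hb.1

lemma LocallyLipschitz.sum {ι E : Type*} [SeminormedAddCommGroup E] {f : ι → X → E}
    (s : Finset ι) (hf : ∀ i ∈ s, LocallyLipschitz (f i)) :
    LocallyLipschitz fun x => ∑ i ∈ s, f i x := by
  simp_rw [← Finset.sum_apply]
  exact Finset.sum_induction f LocallyLipschitz (fun _ _ => LocallyLipschitz.add)
    (LocallyLipschitz.const 0) hf

lemma LocallyLipschitz.finsum {ι E : Type*} [SeminormedAddCommGroup E] {f : ι → X → E}
    (hfin : LocallyFinite fun i => support (f i)) (hf : ∀ i, LocallyLipschitz (f i)) :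
    LocallyLipschitz fun x => ∑ᶠ i, f i x :=
  .of_forall_eventuallyEq fun x =>
    let ⟨s, hs⟩ := finsum_eventually_eq_sum hfin x
    ⟨_, .sum s fun i _ => hf i, hs⟩

variable {E F : Type*} [NormedAddCommGroup E] [NormedSpace ℝ E]
  [NormedAddCommGroup F] [NormedSpace ℝ F]

lemma LocallyLipschitz.comp_of_contDiffAt {φ : E → F} {g : X → E}
    (hφ : ∀ x, ContDiffAt ℝ 1 φ (g x)) (hg : LocallyLipschitz g) :
    LocallyLipschitz (φ ∘ g) := by
  intro x
  obtain ⟨Kg, t, ht, hgt⟩ := hg x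
  obtain ⟨Kφ, u, hu, hφu⟩ := (hφ x).exists_lipschitzOnWith
  refine ⟨Kφ * Kg, t ∩ g ⁻¹' u, inter_mem ht (hg.continuous.continuousAt hu), ?_⟩
  exact hφu.comp (hgt.mono Set.inter_subset_left) fun y hy => hy.2

lemma LocallyLipschitz.smul {f : X → ℝ} {g : X → E} (hf : LocallyLipschitz f)
    (hg : LocallyLipschitz g) : LocallyLipschitz fun x => f x • g x :=
  comp_of_contDiffAt (φ := fun p : ℝ × E => p.1 • p.2)
    (fun _ => contDiffAt_fst.smul contDiffAt_snd) (hf.prodMk hg)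

lemma LocallyLipschitz.inv₀ {f : X → ℝ} (hf : LocallyLipschitz f) (hf0 : ∀ x, f x ≠ 0) :
    LocallyLipschitz fun x => (f x)⁻¹ :=
  comp_of_contDiffAt (φ := fun s : ℝ => s⁻¹) (fun x => contDiffAt_inv ℝ (hf0 x)) hf

end LocallyLipschitz

lemma IsOpen.exists_lipschitzWith_support_eq {X : Type*} [PseudoMetricSpace X] {U : Set X}
    (hU : IsOpen U) : ∃ ψ : X → ℝ, LipschitzWith 1 ψ ∧ (∀ x, 0 ≤ ψ x) ∧ support ψ = U := by
  by_cases hUc : Uᶜ.Nonempty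
  · refine ⟨fun x => infDist x Uᶜ, lipschitz_infDist_pt _, fun _ => infDist_nonneg, ?_⟩
    ext x
    rw [mem_support, ← not_not (a := x ∈ U), ← Set.mem_compl_iff,
      hU.isClosed_compl.notMem_iff_infDist_pos hUc]
    exact ⟨fun h => lt_of_le_of_ne infDist_nonneg (Ne.symm h), ne_of_gt⟩
  · rw [Set.not_nonempty_iff_eq_empty, Set.compl_empty_iff] at hUc
    exact ⟨1, LipschitzWith.const' 1, fun _ => zero_le_one, by simp [hUc]⟩

lemma exists_locallyLipschitz_partitionOfUnity {ι X : Type*} [PseudoMetricSpace X]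
    (u : ι → Set X) (hu : ∀ i, IsOpen (u i)) (hcover : ⋃ i, u i = Set.univ) :
    ∃ φ : ι → X → ℝ, (∀ i, LocallyLipschitz (φ i)) ∧ (LocallyFinite fun i => support (φ i)) ∧
      (∀ i, support (φ i) ⊆ u i) ∧ (∀ i x, 0 ≤ φ i x) ∧ ∀ x, ∑ᶠ i, φ i x = 1 := by
  obtain ⟨v, hv_open, hv_cover, hv_fin, hv_sub⟩ := precise_refinement u hu hcover
  choose ψ hψ_lip hψ_nonneg hψ_supp using fun i => (hv_open i).exists_lipschitzWith_support_eq
  have hψ_fin : LocallyFinite fun i => support (ψ i) := by simpa only [hψ_supp] using hv_fin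
  set S : X → ℝ := fun x => ∑ᶠ i, ψ i x
  have hS_pos : ∀ x, 0 < S x := fun x => by
    obtain ⟨i, hi⟩ := Set.iUnion_eq_univ_iff.1 hv_cover x
    have hψi : 0 < ψ i x := (hψ_nonneg i x).lt_of_ne' (by rwa [← mem_support, hψ_supp])
    exact hψi.trans_le (single_le_finsum i (hψ_fin.point_finite x) fun j => hψ_nonneg j x)
  have hS_lip : LocallyLipschitz S := .finsum hψ_fin fun i => (hψ_lip i).locallyLipschitz
  have hφ_supp : ∀ i, support (fun x => ψ i x / S x) ⊆ support (ψ i) := fun i x hx =>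
    left_ne_zero_of_mul hx
  refine ⟨fun i x => ψ i x / S x, fun i => ?_, hψ_fin.subset hφ_supp,
    fun i => (hφ_supp i).trans (hψ_supp i ▸ hv_sub i),
    fun i x => div_nonneg (hψ_nonneg i x) (hS_pos x).le, fun x => ?_⟩
  · exact (hψ_lip i).locallyLipschitz.smul (hS_lip.inv₀ fun x => (hS_pos x).ne')
  · simp_rw [div_eq_mul_inv, ← finsum_mul]
    exact mul_inv_cancel₀ (hS_pos x).ne'

theorem Continuous.exists_locallyLipschitz_norm_sub_le {X E : Type*} [PseudoMetricSpace X]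
    [NormedAddCommGroup E] [NormedSpace ℝ E] {g : X → E} (hg : Continuous g) {ε : ℝ}
    (hε : 0 < ε) : ∃ G : X → E, LocallyLipschitz G ∧ ∀ x, ‖G x - g x‖ ≤ ε := by
  obtain ⟨φ, hφ_lip, hφ_fin, hφ_sub, hφ_nonneg, hφ_sum⟩ :=
    exists_locallyLipschitz_partitionOfUnity (fun x => g ⁻¹' ball (g x) ε)
      (fun x => isOpen_ball.preimage hg)
      (Set.iUnion_eq_univ_iff.2 fun x => ⟨x, mem_ball_self hε⟩)
  refine ⟨fun x => ∑ᶠ i, φ i x • g i,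
    .finsum (hφ_fin.subset fun i => support_smul_subset_left (φ i) fun _ => g i)
      fun i => (hφ_lip i).smul (.const _), fun x => ?_⟩
  rw [← dist_eq_norm, ← mem_closedBall]
  refine (convex_closedBall _ _).finsum_mem (hφ_nonneg · x) (hφ_sum x) fun i hi => ?_
  exact mem_closedBall_comm.1 (mem_ball.1 (hφ_sub i hi)).le

lemma div_max_mul_eq_min {R n : ℝ} (hR : 0 ≤ R) (hn : 0 ≤ n) : R / max R n * n = min R n := by
  rcases eq_or_ne (max R n) 0 with h0 | h0
  · have hR0 : R = 0 := le_antisymm (h0 ▸ le_max_left _ _) hR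
    have hn0 : n = 0 := le_antisymm (h0 ▸ le_max_right _ _) hn
    simp [hR0, hn0]
  · rw [div_mul_eq_mul_div, ← min_mul_max, mul_div_cancel_right₀ _ h0]

section RadialRetraction

variable {E : Type*} [NormedAddCommGroup E] [NormedSpace ℝ E]

noncomputable def radialRetraction (R : ℝ) (v : E) : E := (R / max R ‖v‖) • v

lemma radialRetraction_of_norm_le {R : ℝ} {v : E} (h : ‖v‖ ≤ R) : radialRetraction R v = v := by
  rcases eq_or_ne v 0 with rfl | hv
  · simp [radialRetraction]
  · rw [radialRetraction, max_eq_left h, div_self ((norm_pos_iff.2 hv).trans_le h).ne', one_smul]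

lemma norm_radialRetraction_le {R : ℝ} (hR : 0 ≤ R) (v : E) : ‖radialRetraction R v‖ ≤ R := by
  rw [radialRetraction, norm_smul, Real.norm_of_nonneg (div_nonneg hR (hR.trans (le_max_left ..))),
    div_max_mul_eq_min hR (norm_nonneg v)]
  exact min_le_left _ _

lemma norm_radialRetraction_sub_radialRetraction_le {R S : ℝ} (hR : 0 ≤ R) (hS : 0 ≤ S) (v : E) :
    ‖radialRetraction R v - radialRetraction S v‖ ≤ |R - S| := by
  have habs (x : ℝ) : |x| * ‖v‖ = |x * ‖v‖| := by rw [abs_mul, abs_norm]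
  rw [radialRetraction, radialRetraction, ← sub_smul, norm_smul, Real.norm_eq_abs, habs, sub_mul,
    div_max_mul_eq_min hR (norm_nonneg v), div_max_mul_eq_min hS (norm_nonneg v)]
  simpa using abs_min_sub_min_le_max R ‖v‖ S ‖v‖

lemma norm_radialRetraction_sub_le_two_mul {R : ℝ} (hR : 0 ≤ R) (v w : E) :
    ‖radialRetraction R v - radialRetraction R w‖ ≤ 2 * ‖v - w‖ := by
  rcases hR.eq_or_lt with rfl | hR
  · simp [radialRetraction]
  set a := max R ‖v‖
  set b := max R ‖w‖
  have ha : 0 < a := hR.trans_le (le_max_left _ _)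
  have hb : 0 < b := hR.trans_le (le_max_left _ _)
  have hRa : R / a ≤ 1 := div_le_one_of_le₀ (le_max_left _ _) ha.le
  have hRa₀ : 0 ≤ R / a := div_nonneg hR.le ha.le
  have hwb : ‖w‖ / b ≤ 1 := div_le_one_of_le₀ (le_max_right _ _) hb.le
  have hba : |b - a| ≤ ‖v - w‖ := by
    calc |b - a| ≤ |‖w‖ - ‖v‖| := by
          simpa only [b, a, max_comm R] using abs_max_sub_max_le_abs _ _ R
      _ ≤ ‖v - w‖ := by rw [abs_sub_comm]; exact abs_norm_sub_norm_le v w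
  have hsplit : radialRetraction R v - radialRetraction R w =
      (R / a) • (v - w) + ((R / a) * ((b - a) / b)) • w := by
    rw [radialRetraction, radialRetraction, smul_sub, sub_add, ← sub_smul]
    congr 2
    field_simp
    ring
  have h₁ : ‖(R / a) • (v - w)‖ ≤ ‖v - w‖ := by
    rw [norm_smul, Real.norm_of_nonneg hRa₀]
    exact mul_le_of_le_one_left (norm_nonneg _) hRa
  have h₂ : ‖((R / a) * ((b - a) / b)) • w‖ ≤ ‖v - w‖ := by
    rw [norm_smul, Real.norm_eq_abs, abs_mul, abs_of_nonneg hRa₀, abs_div, abs_of_pos hb]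
    calc R / a * (|b - a| / b) * ‖w‖ = R / a * (|b - a| * (‖w‖ / b)) := by ring
      _ ≤ 1 * (‖v - w‖ * 1) := by gcongr
      _ = ‖v - w‖ := by ring
  rw [hsplit, two_mul]
  exact (norm_add_le _ _).trans (add_le_add h₁ h₂)

lemma lipschitzOnWith_radialRetraction :
    LipschitzOnWith 3 (fun p : ℝ × E => radialRetraction p.1 p.2) {p | 0 ≤ p.1} :=
  LipschitzOnWith.of_dist_le_mul fun p hp q _ => by
    rw [dist_eq_norm, Prod.dist_eq, Real.dist_eq, dist_eq_norm]
    calc ‖radialRetraction p.1 p.2 - radialRetraction q.1 q.2‖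
        ≤ ‖radialRetraction p.1 p.2 - radialRetraction p.1 q.2‖ +
          ‖radialRetraction p.1 q.2 - radialRetraction q.1 q.2‖ :=
          norm_sub_le_norm_sub_add_norm_sub _ _ _
      _ ≤ 2 * ‖p.2 - q.2‖ + |p.1 - q.1| :=
          add_le_add (norm_radialRetraction_sub_le_two_mul hp _ _)
            (norm_radialRetraction_sub_radialRetraction_le hp ‹_› _)
      _ ≤ 3 * max |p.1 - q.1| ‖p.2 - q.2‖ := by
          linarith [le_max_left |p.1 - q.1| ‖p.2 - q.2‖, le_max_right |p.1 - q.1| ‖p.2 - q.2‖]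

lemma LocallyLipschitz.radialRetraction {X : Type*} [PseudoMetricSpace X] {R : X → ℝ}
    {v : X → E} (hR : LocallyLipschitz R) (hR₀ : ∀ x, 0 ≤ R x) (hv : LocallyLipschitz v) :
    LocallyLipschitz fun x => radialRetraction (R x) (v x) := fun x => by
  obtain ⟨K, t, ht, hK⟩ := hR.prodMk hv x
  exact ⟨3 * K, t, ht, lipschitzOnWith_radialRetraction.comp hK fun y _ => hR₀ y⟩

end RadialRetraction

section LipschitzMajorant

variable {X : Type*} [PseudoMetricSpace X]

noncomputable def lipschitzMajorant (c : X → ℝ) (L : ℝ≥0) (x : X) : ℝ := ⨆ y, c y - L * dist x y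

variable {c : X → ℝ} {B : ℝ}

lemma bddAbove_range_sub_mul_dist (hB : ∀ y, c y ≤ B) (L : ℝ≥0) (x : X) :
    BddAbove (Set.range fun y => c y - L * dist x y) :=
  ⟨B, by
    rintro _ ⟨y, rfl⟩
    linarith [hB y, mul_nonneg L.coe_nonneg (dist_nonneg (x := x) (y := y))]⟩

lemma le_lipschitzMajorant (hB : ∀ y, c y ≤ B) (L : ℝ≥0) (x : X) :
    c x ≤ lipschitzMajorant c L x := by
  simpa [lipschitzMajorant] using le_ciSup (bddAbove_range_sub_mul_dist hB L x) x

lemma lipschitzMajorant_le (hB : ∀ y, c y ≤ B) (L : ℝ≥0) (x : X) :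
    lipschitzMajorant c L x ≤ B :=
  haveI : Nonempty X := ⟨x⟩
  ciSup_le fun y => by linarith [hB y, mul_nonneg L.coe_nonneg (dist_nonneg (x := x) (y := y))]

lemma lipschitzWith_lipschitzMajorant (hB : ∀ y, c y ≤ B) (L : ℝ≥0) :
    LipschitzWith L (lipschitzMajorant c L) :=
  LipschitzWith.of_le_add_mul L fun x x' =>
    haveI : Nonempty X := ⟨x⟩
    ciSup_le fun y => by
      have : c y - L * dist x' y ≤ lipschitzMajorant c L x' :=
        le_ciSup (bddAbove_range_sub_mul_dist hB L x') y
      have := mul_le_mul_of_nonneg_left (dist_triangle x' x y) L.coe_nonneg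
      rw [dist_comm x' x] at this
      linarith

lemma lipschitzMajorant_le_of_forall_closedBall (hB : ∀ y, c y ≤ B) {L : ℝ≥0} {x : X}
    {ρ M : ℝ} (hρ : B ≤ L * ρ) (hM : ∀ y ∈ closedBall x ρ, c y ≤ M) :
    lipschitzMajorant c L x ≤ max M 0 :=
  haveI : Nonempty X := ⟨x⟩
  ciSup_le fun y => by
    rcases le_or_gt (dist x y) ρ with hy | hy
    · have := hM y (mem_closedBall_comm.1 hy)
      linarith [le_max_left M 0, mul_nonneg L.coe_nonneg (dist_nonneg (x := x) (y := y))]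
    · have := mul_le_mul_of_nonneg_left hy.le L.coe_nonneg
      linarith [hB y, le_max_right M 0]

end LipschitzMajorant

section CappedLiminfNorm

variable {X E : Type*} [NormedAddCommGroup E] (h : ℕ → X → E) (n : ℕ) (x : X)

noncomputable def cappedLiminfNorm : ℝ :=
  (min (liminf (fun k => ENNReal.ofReal ‖h k x‖) atTop) n).toReal

lemma cappedLiminfNorm_nonneg : 0 ≤ cappedLiminfNorm h n x := toReal_nonneg

lemma cappedLiminfNorm_le : cappedLiminfNorm h n x ≤ n := by
  simpa [cappedLiminfNorm] using toReal_mono (natCast_ne_top n) (min_le_right _ _)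

variable {h n x}

lemma cappedLiminfNorm_le_of_eventually {C : ℝ} (hC : 0 ≤ C)
    (hev : ∀ᶠ k in atTop, ‖h k x‖ ≤ C) : cappedLiminfNorm h n x ≤ C :=
  toReal_le_of_le_ofReal hC <| (min_le_left _ _).trans <|
    liminf_le_of_frequently_le' (hev.frequently.mono fun _ hk => ofReal_le_ofReal hk)

lemma le_cappedLiminfNorm_of_eventually {c : ℝ} (hc : c ≤ n)
    (hev : ∀ᶠ k in atTop, c ≤ ‖h k x‖) : c ≤ cappedLiminfNorm h n x := by
  have hle : ENNReal.ofReal c ≤ min (liminf (fun k => ENNReal.ofReal ‖h k x‖) atTop) n :=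
    le_min (le_liminf_of_le (by isBoundedDefault) (hev.mono fun _ hk => ofReal_le_ofReal hk))
      (by simpa using ofReal_le_ofReal hc)
  calc c ≤ (ENNReal.ofReal c).toReal := by rw [toReal_ofReal']; exact le_max_left _ _
    _ ≤ cappedLiminfNorm h n x :=
        toReal_mono (ne_top_of_le_ne_top (natCast_ne_top n) (min_le_right _ _)) hle

end CappedLiminfNorm

section TruncationLevel

variable {X E : Type*} [PseudoMetricSpace X] [NormedAddCommGroup E] {h : ℕ → X → E} {n : ℕ}
  {x : X}

variable (h n x) in
noncomputable def truncLevel : ℝ :=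
  1 + lipschitzMajorant (cappedLiminfNorm h n) ((n : ℝ≥0) ^ 2) x

lemma one_add_cappedLiminfNorm_le_truncLevel : 1 + cappedLiminfNorm h n x ≤ truncLevel h n x :=
  add_le_add_right (le_lipschitzMajorant (cappedLiminfNorm_le h n) _ x) 1

lemma truncLevel_nonneg : 0 ≤ truncLevel h n x := by
  linarith [one_add_cappedLiminfNorm_le_truncLevel (h := h) (n := n) (x := x),
    cappedLiminfNorm_nonneg h n x]

lemma truncLevel_le : truncLevel h n x ≤ 1 + n :=
  add_le_add_right (lipschitzMajorant_le (cappedLiminfNorm_le h n) _ x) 1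

variable (h n) in
lemma locallyLipschitz_truncLevel : LocallyLipschitz (truncLevel h n) :=
  (LocallyLipschitz.const 1).add
    (lipschitzWith_lipschitzMajorant (cappedLiminfNorm_le h n) _).locallyLipschitz

lemma truncLevel_le_of_forall_closedBall {M : ℝ}
    (hM : ∀ y ∈ closedBall x (1 / n), cappedLiminfNorm h n y ≤ M) :
    truncLevel h n x ≤ 1 + max M 0 := by
  refine add_le_add_right (lipschitzMajorant_le_of_forall_closedBall (cappedLiminfNorm_le h n)
    ?_ hM) 1
  rcases eq_or_ne n 0 with rfl | hn
  · simp
  · exact le_of_eq (by push_cast; field_simp)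

end TruncationLevel

lemma closedBall_subset_eball_two_mul {X : Type*} [PseudoMetricSpace X] {a y : X} {r : ℝ≥0∞}
    {ρ : ℝ} (hy : y ∈ eball a r) (hρ : ENNReal.ofReal ρ < r) : closedBall y ρ ⊆ eball a (2 * r) :=
  fun y' hy' => calc
    edist y' a ≤ edist y' y + edist y a := edist_triangle _ _ _
    _ < r + r := ENNReal.add_lt_add ((edist_dist y' y ▸ ofReal_le_ofReal hy').trans_lt hρ) hy
    _ = 2 * r := (two_mul r).symm

section TruncatedApprox

variable {X E : Type*} [PseudoMetricSpace X] [NormedAddCommGroup E] [NormedSpace ℝ E]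
  {G h : ℕ → X → E}

variable (G h) in
noncomputable def truncatedApprox (n : ℕ) (x : X) : E :=
  radialRetraction (truncLevel h n x) (G n x)

lemma norm_truncatedApprox_le (n : ℕ) (x : X) : ‖truncatedApprox G h n x‖ ≤ 1 + n :=
  (norm_radialRetraction_le truncLevel_nonneg _).trans truncLevel_le

lemma LocallyLipschitz.truncatedApprox {n : ℕ} (hG : LocallyLipschitz (G n)) :
    LocallyLipschitz (truncatedApprox G h n) :=
  (locallyLipschitz_truncLevel h n).radialRetraction (fun _ => truncLevel_nonneg) hG

lemma truncatedApprox_eq (hG : ∀ n x, ‖G n x - h n x‖ ≤ 1 / (n + 1)) {k : ℕ} {x : X} {z : E}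
    (hev : ∀ᶠ j in atTop, ‖h j x - z‖ ≤ 1 / 4)
    (hk : ‖h k x - z‖ ≤ 1 / 4) (hzk : ‖z‖ ≤ k) (hk₁ : 1 ≤ k) :
    truncatedApprox G h k x = G k x := by
  apply radialRetraction_of_norm_le
  have hcap : ‖z‖ - 1 / 4 ≤ cappedLiminfNorm h k x :=
    le_cappedLiminfNorm_of_eventually (by linarith) <| hev.mono fun j hj => by
      linarith [norm_sub_norm_le z (h j x), norm_sub_rev z (h j x)]
  have hlevel : ‖z‖ + 3 / 4 ≤ truncLevel h k x := by
    linarith [one_add_cappedLiminfNorm_le_truncLevel (h := h) (n := k) (x := x)]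
  have hk' : 1 / ((k : ℝ) + 1) ≤ 1 / 2 := by
    gcongr
    exact_mod_cast Nat.succ_le_succ hk₁
  have hGk : ‖G k x‖ ≤ ‖z‖ + 3 / 4 := by
    linarith [norm_le_norm_add_norm_sub' (G k x) z, hG k x,
      norm_sub_le_norm_sub_add_norm_sub (G k x) (h k x) z]
  exact hGk.trans hlevel

lemma tendsto_truncatedApprox (hG : ∀ n x, ‖G n x - h n x‖ ≤ 1 / (n + 1)) {x : X} {z : E}
    (hz : Tendsto (fun n => h n x) atTop (𝓝 z)) :
    Tendsto (fun n => truncatedApprox G h n x) atTop (𝓝 z) := by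
  have hev : ∀ᶠ j in atTop, ‖h j x - z‖ ≤ 1 / 4 :=
    (tendsto_iff_norm_sub_tendsto_zero.1 hz).eventually (ge_mem_nhds (by norm_num))
  have hGz : Tendsto (fun n => G n x) atTop (𝓝 z) := by
    simpa using
      hz.add (squeeze_zero_norm (fun n => hG n x) tendsto_one_div_add_atTop_nhds_zero_nat)
  refine hGz.congr' ?_
  filter_upwards [hev, eventually_ge_atTop ⌈‖z‖⌉₊, eventually_ge_atTop 1] with k hk hzk hk₁
  exact (truncatedApprox_eq hG hev hk (Nat.ceil_le.1 hzk) hk₁).symm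

lemma UCPC.truncatedApprox (hG : ∀ n x, ‖G n x - h n x‖ ≤ 1 / (n + 1)) {f : X → E}
    (hf : UCPC h f) : UCPC (truncatedApprox G h) f := by
  intro y₀ hy₀ ε hε
  obtain ⟨k₀, U, hU, hk₀⟩ := hf y₀ hy₀ (min (ε / 2) (1 / 4)) (by positivity)
  obtain ⟨N, hN⟩ := exists_nat_one_div_lt (half_pos hε)
  refine ⟨max (max k₀ N) (max ⌈‖f y₀‖⌉₊ 1), U, hU, fun k hk y hy => ?_⟩
  obtain ⟨⟨hk₀k, hNk⟩, hzk, hk₁⟩ := by simpa only [ge_iff_le, max_le_iff] using hk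
  have hclose : ∀ j ≥ k₀, ‖h j y - f y₀‖ < min (ε / 2) (1 / 4) := fun j hj => hk₀ j hj y hy
  have hquarter : ∀ j ≥ k₀, ‖h j y - f y₀‖ ≤ 1 / 4 := fun j hj =>
    (hclose j hj).le.trans (min_le_right _ _)
  rw [truncatedApprox_eq hG (eventually_atTop.2 ⟨k₀, hquarter⟩) (hquarter k hk₀k)
    (Nat.ceil_le.1 hzk) hk₁]
  have hGk : ‖G k y - h k y‖ < ε / 2 := by
    refine (hG k y).trans_lt (lt_of_le_of_lt ?_ hN)
    gcongr
  calc ‖G k y - f y₀‖ ≤ ‖G k y - h k y‖ + ‖h k y - f y₀‖ := norm_sub_le_norm_sub_add_norm_sub ..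
    _ < ε / 2 + ε / 2 := add_lt_add hGk ((hclose k hk₀k).trans_le (min_le_left _ _))
    _ = ε := add_halves ε

lemma exists_norm_truncatedApprox_le_of_eball {f : X → E} {a : X} {r : ℝ≥0∞} {M : ℝ}
    (hr : 0 < r)
    (hf : ∀ y ∈ eball a (2 * r), Tendsto (fun n => h n y) atTop (𝓝 (f y)))
    (hM : ∀ y ∈ eball a (2 * r), ‖f y‖ ≤ M) :
    ∃ M', ∀ n, ∀ y ∈ eball a r, ‖truncatedApprox G h n y‖ ≤ M' := by
  have hcap : ∀ n, ∀ y ∈ eball a (2 * r), cappedLiminfNorm h n y ≤ M + 1 := fun n y hy =>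
    (cappedLiminfNorm_le_of_eventually (by positivity)
      ((hf y hy).norm.eventually (ge_mem_nhds (lt_add_one _)))).trans (by linarith [hM y hy])
  obtain ⟨n₀, hn₀⟩ := ENNReal.exists_inv_nat_lt hr.ne'
  refine ⟨1 + max (n₀ : ℝ) (max (M + 1) 0), fun n y hy =>
    (norm_radialRetraction_le truncLevel_nonneg _).trans ?_⟩
  rcases lt_or_ge n n₀ with hn | hn
  · have : (n : ℝ) ≤ n₀ := by exact_mod_cast hn.le
    linarith [truncLevel_le (h := h) (n := n) (x := y), le_max_left (n₀ : ℝ) (max (M + 1) 0)]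
  have hn' : ENNReal.ofReal (1 / n) < r := by
    have hinv : (n : ℝ≥0∞)⁻¹ ≤ (n₀ : ℝ≥0∞)⁻¹ := ENNReal.inv_le_inv.2 (by exact_mod_cast hn)
    refine lt_of_le_of_lt ?_ (hinv.trans_lt hn₀)
    rcases eq_or_ne n 0 with rfl | hn0
    · simp
    · rw [one_div, ofReal_inv_of_pos (by positivity), ofReal_natCast]
  exact (truncLevel_le_of_forall_closedBall fun y' hy' =>
    hcap n y' (closedBall_subset_eball_two_mul hy hn' hy')).trans
    (by linarith [le_max_right (n₀ : ℝ) (max (M + 1) 0)])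

end TruncatedApprox

/-- Given a function `f` and a sequence of continuous functions `h n`, there
exist bounded locally Lipschitz functions `F n` converging wherever `h n`
converges, preserving UCPC, and uniformly bounded on balls on whose doubles
`h n → f` pointwise and `f` is bounded. -/
theorem exists_locallyLipschitz_seq {Y Z : Type*}
    [MetricSpace Y] [NormedAddCommGroup Z] [NormedSpace ℝ Z]
    (f : Y → Z) (h : ℕ → Y → Z) (hcont : ∀ n, Continuous (h n)) :
    ∃ F : ℕ → Y → Z,
      (∀ n, ∃ M : ℝ, ∀ y, ‖F n y‖ ≤ M) ∧
      (∀ n, LocallyLipschitz (F n)) ∧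
      (∀ y, ∀ z : Z, Tendsto (fun n => h n y) atTop (nhds z) →
        Tendsto (fun n => F n y) atTop (nhds z)) ∧
      (UCPC h f → UCPC F f) ∧
      (∀ a : Y, ∀ r : ℝ≥0∞, 0 < r →
        (∀ y ∈ EMetric.ball a (2 * r), Tendsto (fun n => h n y) atTop (nhds (f y))) →
        (∃ M : ℝ, ∀ y ∈ EMetric.ball a (2 * r), ‖f y‖ ≤ M) →
        ∃ M : ℝ, ∀ n, ∀ y ∈ EMetric.ball a r, ‖F n y‖ ≤ M) := by
  choose G hG_lip hG_approx using fun n : ℕ =>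
    (hcont n).exists_locallyLipschitz_norm_sub_le (Nat.one_div_pos_of_nat (α := ℝ) (n := n))
  exact ⟨truncatedApprox G h, fun n => ⟨1 + n, norm_truncatedApprox_le n⟩,
    fun n => (hG_lip n).truncatedApprox, fun _ _ => tendsto_truncatedApprox hG_approx,
    UCPC.truncatedApprox hG_approx,
    fun _ _ hr hconv ⟨_, hM⟩ => exists_norm_truncatedApprox_le_of_eball hr hconv hM⟩
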